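/- Let X be a convex polyomino such that V(X) ⊆ ℕ² is a sublattice of ℕ² with minimum (0,0) and maximum (m,n). The set of left-boundary vertices of X is totally ordered under the componentwise order, and so is the set of bottom-boundary vertices of X. Consequently, if p and p' are incomparable join-irreducible elements of V(X), then one of them is a left-boundary vertex and the other is a bottom-boundary vertex. -/

import Mathlib

/-!  Cells in ℤ² are identified with their top-right corners: the cell `C v`
is the unit square `[v.1 - 1, v.1] × [v.2 - 1, v.2] ⊆ ℝ²`. -/

/-- Two cells (identified by their top-right corners) are adjacent if they share an edge. -/
def Adj (c d : ℤ × ℤ) : Prop :=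
  (c.1 = d.1 ∧ (c.2 = d.2 + 1 ∨ d.2 = c.2 + 1)) ∨
  (c.2 = d.2 ∧ (c.1 = d.1 + 1 ∨ d.1 = c.1 + 1))

/-- A polyomino: a nonempty finite set of cells, connected under adjacency. -/
def IsPolyomino (X : Finset (ℤ × ℤ)) : Prop :=
  X.Nonempty ∧ ∀ c ∈ X, ∀ d ∈ X,
    Relation.ReflTransGen (fun a b => a ∈ X ∧ b ∈ X ∧ Adj a b) c d

/-- A polyomino is convex if it is both row-convex and column-convex. -/
def IsConvexPoly (X : Finset (ℤ × ℤ)) : Prop :=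
  (∀ a b x y : ℤ, (a, y) ∈ X → (b, y) ∈ X → a ≤ x → x ≤ b → (x, y) ∈ X) ∧
  (∀ a b x y : ℤ, (y, a) ∈ X → (y, b) ∈ X → a ≤ x → x ≤ b → (y, x) ∈ X)

/-- `X` is thin if it contains no 2 × 2 block of four cells. -/
def IsThin (X : Finset (ℤ × ℤ)) : Prop :=
  ¬ ∃ w : ℤ × ℤ, w ∈ X ∧ w + ((1, 0) : ℤ × ℤ) ∈ X ∧
    w + ((0, 1) : ℤ × ℤ) ∈ X ∧ w + ((1, 1) : ℤ × ℤ) ∈ X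

/-- `X` is `L`-convex: convex, and any two cells are joined by a monotone path of cells
of `X` changing direction (horizontal to vertical or vice versa) at most once. -/
def IsLConvexPoly (X : Finset (ℤ × ℤ)) : Prop :=
  IsConvexPoly X ∧ ∀ c ∈ X, ∀ d ∈ X,
    ((∀ x : ℤ, min c.1 d.1 ≤ x → x ≤ max c.1 d.1 → ((x, c.2) : ℤ × ℤ) ∈ X) ∧
     (∀ y : ℤ, min c.2 d.2 ≤ y → y ≤ max c.2 d.2 → ((d.1, y) : ℤ × ℤ) ∈ X)) ∨
    ((∀ y : ℤ, min c.2 d.2 ≤ y → y ≤ max c.2 d.2 → ((c.1, y) : ℤ × ℤ) ∈ X) ∧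
     (∀ x : ℤ, min c.1 d.1 ≤ x → x ≤ max c.1 d.1 → ((x, d.2) : ℤ × ℤ) ∈ X))

/-- The vertex set `V(X)`: all corners of cells of `X`, partially ordered componentwise. -/
def Verts (X : Finset (ℤ × ℤ)) : Set (ℤ × ℤ) :=
  {v | ∃ c ∈ X, v = c ∨ v = c - ((1, 0) : ℤ × ℤ) ∨
    v = c - ((0, 1) : ℤ × ℤ) ∨ v = c - ((1, 1) : ℤ × ℤ)}

/-- Setup: `V(X) ⊆ ℕ²` is a sublattice of `ℕ²` (closed under componentwise max and min)
with minimum `(0,0)` and maximum `(m,n)`. -/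
def LatticeSetup (X : Finset (ℤ × ℤ)) (m n : ℕ) : Prop :=
  (∀ a ∈ Verts X, ∀ b ∈ Verts X, a ⊔ b ∈ Verts X ∧ a ⊓ b ∈ Verts X) ∧
  ((0, 0) : ℤ × ℤ) ∈ Verts X ∧ (((m : ℤ), (n : ℤ)) : ℤ × ℤ) ∈ Verts X ∧
  ∀ v ∈ Verts X, ((0, 0) : ℤ × ℤ) ≤ v ∧ v ≤ (((m : ℤ), (n : ℤ)) : ℤ × ℤ)

/-- Join-irreducible elements of the lattice `V(X)`: nonminimal elements that are not
the join of two elements strictly below them. -/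
def JoinIrr (X : Finset (ℤ × ℤ)) : Set (ℤ × ℤ) :=
  {p | p ∈ Verts X ∧ (∃ q ∈ Verts X, q < p) ∧
    ∀ a ∈ Verts X, ∀ b ∈ Verts X, a < p → b < p → a ⊔ b ≠ p}

/-- `ω` is an injective order-preserving map from `JI(X)` to `ℕ`. -/
def OmegaOK (X : Finset (ℤ × ℤ)) (ω : ℤ × ℤ → ℕ) : Prop :=
  Set.InjOn ω (JoinIrr X) ∧
  ∀ p ∈ JoinIrr X, ∀ q ∈ JoinIrr X, p ≤ q → ω p ≤ ω q

/-- A maximal chain of `V(X)`, written as a monotone unit lattice path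
`μ 0 = (0,0) < μ 1 < ⋯ < μ (m+n) = (m,n)` through vertices of `X`
(normalized by `μ i = (m,n)` for `i ≥ m+n`). -/
def IsMaxChainPath (X : Finset (ℤ × ℤ)) (m n : ℕ) (μ : ℕ → ℤ × ℤ) : Prop :=
  μ 0 = (0, 0) ∧
  (∀ i, i < m + n → μ (i + 1) - μ i = ((1, 0) : ℤ × ℤ) ∨
    μ (i + 1) - μ i = ((0, 1) : ℤ × ℤ)) ∧
  (∀ i, m + n ≤ i → μ i = (((m : ℤ), (n : ℤ)) : ℤ × ℤ)) ∧
  (∀ i, i ≤ m + n → μ i ∈ Verts X)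

/-- `i` is a descent of the maximal chain `μ`:  `ω p_i > ω p_{i+1}`, where `p_j` is the
unique join-irreducible `p` with `p ≤ μ j` and `p ≰ μ (j-1)`. -/
def DescentAt (X : Finset (ℤ × ℤ)) (ω : ℤ × ℤ → ℕ) (μ : ℕ → ℤ × ℤ) (i : ℕ) : Prop :=
  ∃ p ∈ JoinIrr X, ∃ q ∈ JoinIrr X,
    p ≤ μ i ∧ ¬ p ≤ μ (i - 1) ∧ q ≤ μ (i + 1) ∧ ¬ q ≤ μ i ∧ ω q < ω p

/-- The descent set of a maximal chain: descents `i` with `1 ≤ i ≤ m+n-1`. -/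
def Des (X : Finset (ℤ × ℤ)) (m n : ℕ) (ω : ℤ × ℤ → ℕ) (μ : ℕ → ℤ × ℤ) : Set ℕ :=
  {i | 1 ≤ i ∧ i < m + n ∧ DescentAt X ω μ i}

/-- `|M_k(X)|`: the number of maximal chains of `V(X)` with exactly `k` descents. -/
noncomputable def numChains (X : Finset (ℤ × ℤ)) (m n : ℕ) (ω : ℤ × ℤ → ℕ) (k : ℕ) : ℕ :=
  Set.ncard {μ : ℕ → ℤ × ℤ | IsMaxChainPath X m n μ ∧ (Des X m n ω μ).ncard = k}

/-- A `k`-rook configuration in `X`: `k` cells of `X`, no two in the same row or column. -/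
def IsRookConfig (X : Finset (ℤ × ℤ)) (k : ℕ) (S : Finset (ℤ × ℤ)) : Prop :=
  ↑S ⊆ (↑X : Set (ℤ × ℤ)) ∧ S.card = k ∧
  ∀ c ∈ S, ∀ d ∈ S, c ≠ d → c.1 ≠ d.1 ∧ c.2 ≠ d.2

/-- `r_k`: the number of `k`-rook configurations in `X`. -/
noncomputable def rook (X : Finset (ℤ × ℤ)) (k : ℕ) : ℕ :=
  Set.ncard {S : Finset (ℤ × ℤ) | IsRookConfig X k S}

/-- The map `ψ`: sends a maximal chain `μ` to the set of cells `C (μ (i+1))` for `i ∈ Des μ`. -/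
def psi (X : Finset (ℤ × ℤ)) (m n : ℕ) (ω : ℤ × ℤ → ℕ) (μ : ℕ → ℤ × ℤ) :
    Set (ℤ × ℤ) :=
  (fun i => μ (i + 1)) '' Des X m n ω μ

/-- The ideal `I_X` of the polyomino ring: generated by the inner 2-minors
`x_a x_b - x_c x_d` for intervals `[a,b]` of `V(X)`. -/
noncomputable def polyominoIdeal (kk : Type*) [Field kk] (X : Finset (ℤ × ℤ)) :
    Ideal (MvPolynomial (Verts X) kk) :=
  Ideal.span {f | ∃ a b c d : Verts X,
    (a : ℤ × ℤ) < (b : ℤ × ℤ) ∧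
    (c : ℤ × ℤ) = (((a : ℤ × ℤ).1, (b : ℤ × ℤ).2) : ℤ × ℤ) ∧
    (d : ℤ × ℤ) = (((b : ℤ × ℤ).1, (a : ℤ × ℤ).2) : ℤ × ℤ) ∧
    f = MvPolynomial.X a * MvPolynomial.X b - MvPolynomial.X c * MvPolynomial.X d}

/-- `dim_k (k[X])_i`: the dimension of the degree-`i` graded component of `k[X] = R/I_X`,
realized as the image of the homogeneous degree-`i` part of `R` in the quotient. -/
noncomputable def hilbCoeff (kk : Type*) [Field kk] (X : Finset (ℤ × ℤ)) (i : ℕ) : ℕ :=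
  Module.finrank kk (Submodule.map
    (Ideal.Quotient.mkₐ kk (polyominoIdeal kk X)).toLinearMap
    (MvPolynomial.homogeneousSubmodule (Verts X) kk i))

/-- The Hilbert series `HS(t) = Σ_{i ≥ 0} dim_k (k[X])_i t^i ∈ ℤ[[t]]`. -/
noncomputable def hilbSeries (kk : Type*) [Field kk] (X : Finset (ℤ × ℤ)) :
    PowerSeries ℤ :=
  PowerSeries.mk fun i => (hilbCoeff kk X i : ℤ)

/-- The region `⋃ X ⊆ ℝ²` covered by the cells of `X`. -/
def Region (X : Finset (ℤ × ℤ)) : Set (ℝ × ℝ) :=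
  ⋃ c ∈ X, Set.Icc (((c.1 : ℝ) - 1, (c.2 : ℝ) - 1) : ℝ × ℝ) (((c.1 : ℝ), (c.2 : ℝ)) : ℝ × ℝ)

/-- Left-boundary vertices: top-left corners of cells of `X` lying on the topological
boundary of the region `⋃ X ⊆ ℝ²`. -/
def LeftBdry (X : Finset (ℤ × ℤ)) : Set (ℤ × ℤ) :=
  {v | (∃ c ∈ X, v = c - ((1, 0) : ℤ × ℤ)) ∧
    (((v.1 : ℝ), (v.2 : ℝ)) : ℝ × ℝ) ∈ frontier (Region X)}

/-- Bottom-boundary vertices: bottom-right corners of cells of `X` lying on the topological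
boundary of the region `⋃ X ⊆ ℝ²`. -/
def BottomBdry (X : Finset (ℤ × ℤ)) : Set (ℤ × ℤ) :=
  {v | (∃ c ∈ X, v = c - ((0, 1) : ℤ × ℤ)) ∧
    (((v.1 : ℝ), (v.2 : ℝ)) : ℝ × ℝ) ∈ frontier (Region X)}

/-! The sublattice property of `V(X)`, with convexity and connectedness, makes the set of cells
itself closed under componentwise `⊔` and `⊓`: the vertex `a ⊔ b` is a corner of one of the four
cells around it, and each of these forces the cell `a ⊔ b` by convexity (the diagonal one after
crossing from column `b.1` to column `b.1 + 1`). So `X` contains the rectangle spanned by an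
upper-left and a lower-right cell, and two incomparable left (bottom) boundary vertices would put
all four cells around one of them into `X`, making it interior. A join-irreducible `p` is not a
cell, as otherwise `p = (p.1 - 1, p.2) ⊔ (p.1, p.2 - 1)`; hence it is a left or bottom boundary
vertex unless the cell diagonally above it is the only cell at `p`, which then lies below and to
the left of all cells, contradicting that `p` is not the minimum. -/

theorem Relation.ReflTransGen.exists_le_lt_step {α β : Type*} [LinearOrder β]
    {r : α → α → Prop} {f : α → β} {a b : α} {i : β}
    (h : Relation.ReflTransGen r a b) (ha : f a ≤ i) (hb : i < f b) :
    ∃ x y, r x y ∧ f x ≤ i ∧ i < f y := by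
  induction h with
  | refl => exact absurd hb ha.not_gt
  | @tail c d _ hcd ih =>
    by_cases hc : f c ≤ i
    · exact ⟨c, d, hcd, hc, hb⟩
    · exact ih (not_le.1 hc)

section Cells

variable {X : Finset (ℤ × ℤ)}

theorem IsPolyomino.exists_mem_of_le_lt_fst (hX : IsPolyomino X) {a b : ℤ × ℤ}
    (ha : a ∈ X) (hb : b ∈ X) {i : ℤ} (hai : a.1 ≤ i) (hib : i < b.1) :
    ∃ y, (i, y) ∈ X ∧ (i + 1, y) ∈ X := by
  obtain ⟨⟨c₁, c₂⟩, ⟨d₁, d₂⟩, ⟨hc, hd, hcd⟩, hci, hid⟩ :=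
    (hX.2 a ha b hb).exists_le_lt_step (f := Prod.fst) hai hib
  dsimp only at hci hid
  rcases hcd with ⟨h, -⟩ | ⟨rfl, h⟩
  · omega
  · obtain rfl : c₁ = i := by omega
    obtain rfl : d₁ = c₁ + 1 := by omega
    exact ⟨c₂, hc, hd⟩

theorem IsPolyomino.exists_mem_of_le_lt_snd (hX : IsPolyomino X) {a b : ℤ × ℤ}
    (ha : a ∈ X) (hb : b ∈ X) {j : ℤ} (haj : a.2 ≤ j) (hjb : j < b.2) :
    ∃ x, (x, j) ∈ X ∧ (x, j + 1) ∈ X := by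
  obtain ⟨⟨c₁, c₂⟩, ⟨d₁, d₂⟩, ⟨hc, hd, hcd⟩, hcj, hjd⟩ :=
    (hX.2 a ha b hb).exists_le_lt_step (f := Prod.snd) haj hjb
  dsimp only at hcj hjd
  rcases hcd with ⟨rfl, h⟩ | ⟨h, -⟩
  · obtain rfl : c₂ = j := by omega
    obtain rfl : d₂ = c₂ + 1 := by omega
    exact ⟨c₁, hc, hd⟩
  · omega

theorem mem_verts_iff {v : ℤ × ℤ} :
    v ∈ Verts X ↔ ∃ c ∈ X, (c.1 = v.1 ∨ c.1 = v.1 + 1) ∧ (c.2 = v.2 ∨ c.2 = v.2 + 1) := by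
  constructor
  · rintro ⟨c, hc, h | h | h | h⟩ <;> exact ⟨c, hc, by simp [h]⟩
  · rintro ⟨c, hc, h₁, h₂⟩
    refine ⟨c, hc, ?_⟩
    rcases h₁ with h₁ | h₁ <;> rcases h₂ with h₂ | h₂ <;> simp [Prod.ext_iff] <;> omega

theorem mem_verts_of_mem {c : ℤ × ℤ} (hc : c ∈ X) : c ∈ Verts X :=
  ⟨c, hc, Or.inl rfl⟩

theorem IsConvexPoly.supClosed (hconv : IsConvexPoly X) (hX : IsPolyomino X)
    (hV : SupClosed (Verts X)) : SupClosed (X : Set (ℤ × ℤ)) := by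
  intro a ha b hb
  wlog hab : a.1 ≤ b.1 generalizing a b
  · simpa only [sup_comm] using this hb ha (by omega)
  rcases le_or_gt a.2 b.2 with h | h
  · rwa [sup_eq_right.2 (Prod.le_def.2 ⟨hab, h⟩)]
  have hsup : a ⊔ b = (b.1, a.2) := by ext <;> simp [hab, h.le]
  have hE : (b.1 + 1, a.2) ∈ X → (b.1, a.2) ∈ X := fun hE =>
    hconv.1 a.1 (b.1 + 1) b.1 a.2 ha hE hab (by omega)
  rw [hsup]
  have hcorner : (b.1, a.2) ∈ Verts X := hsup ▸ hV (mem_verts_of_mem ha) (mem_verts_of_mem hb)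
  obtain ⟨⟨c₁, c₂⟩, hc, h₁ | h₁, h₂ | h₂⟩ := mem_verts_iff.1 hcorner <;>
    dsimp only at h₁ h₂ <;> subst h₁ h₂
  · exact hc
  · exact hconv.2 b.2 (a.2 + 1) a.2 b.1 hb hc h.le (by omega)
  · exact hE hc
  · obtain ⟨y, hy, hy'⟩ := hX.exists_mem_of_le_lt_fst hb hc le_rfl (by simp)
    rcases le_or_gt a.2 y with hay | hya
    · exact hconv.2 b.2 y a.2 b.1 hb hy h.le hay
    · exact hE (hconv.2 y (a.2 + 1) a.2 (b.1 + 1) hy' hc hya.le (by omega))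

theorem IsConvexPoly.infClosed (hconv : IsConvexPoly X) (hX : IsPolyomino X)
    (hV : InfClosed (Verts X)) : InfClosed (X : Set (ℤ × ℤ)) := by
  intro a ha b hb
  wlog hab : a.1 ≤ b.1 generalizing a b
  · simpa only [inf_comm] using this hb ha (by omega)
  rcases le_or_gt a.2 b.2 with h | h
  · rwa [inf_eq_left.2 (Prod.le_def.2 ⟨hab, h⟩)]
  have hinf : a ⊓ b = (a.1, b.2) := by ext <;> simp [hab, h.le]
  have hW : (a.1 - 1, b.2) ∈ X → (a.1, b.2) ∈ X := fun hW =>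
    hconv.1 (a.1 - 1) b.1 a.1 b.2 hW hb (by omega) hab
  rw [hinf]
  have hcorner : (a.1 - 1, b.2 - 1) ∈ Verts X := by
    have ha' : (a.1 - 1, a.2 - 1) ∈ Verts X := mem_verts_iff.2 ⟨a, ha, by simp⟩
    have hb' : (b.1 - 1, b.2 - 1) ∈ Verts X := mem_verts_iff.2 ⟨b, hb, by simp⟩
    have := hV ha' hb'
    rwa [show (a.1 - 1, a.2 - 1) ⊓ (b.1 - 1, b.2 - 1) = (a.1 - 1, b.2 - 1) by
      ext <;> simp [hab, h.le]] at this
  obtain ⟨⟨c₁, c₂⟩, hc, h₁ | h₁, h₂ | h₂⟩ := mem_verts_iff.1 hcorner <;>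
    dsimp only at h₁ h₂ <;> subst h₁ h₂
  · obtain ⟨y, hy, hy'⟩ := hX.exists_mem_of_le_lt_fst hc ha le_rfl (by simp)
    rw [sub_add_cancel] at hy'
    rcases le_or_gt y b.2 with hyb | hby
    · exact hconv.2 y a.2 b.2 a.1 hy' ha hyb h.le
    · exact hW (hconv.2 (b.2 - 1) y b.2 (a.1 - 1) hc hy (by omega) hby.le)
  · exact hW (by simpa using hc)
  · exact hconv.2 (b.2 - 1) a.2 b.2 a.1 (by simpa using hc) ha (by omega) h.le
  · simpa using hc

theorem IsConvexPoly.mem_rectangle (hconv : IsConvexPoly X)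
    (hsup : SupClosed (X : Set (ℤ × ℤ))) (hinf : InfClosed (X : Set (ℤ × ℤ)))
    {a b : ℤ × ℤ} (ha : a ∈ X) (hb : b ∈ X) {x y : ℤ}
    (hx₁ : a.1 ≤ x) (hx₂ : x ≤ b.1) (hy₁ : b.2 ≤ y) (hy₂ : y ≤ a.2) : (x, y) ∈ X := by
  have hab : a ⊓ b = (a.1, b.2) := by ext <;> simp <;> omega
  have hba : a ⊔ b = (b.1, a.2) := by ext <;> simp <;> omega
  have hleft : (a.1, y) ∈ X := hconv.2 b.2 a.2 y a.1 (hab ▸ hinf ha hb) ha hy₁ hy₂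
  have hright : (b.1, y) ∈ X := hconv.2 b.2 a.2 y b.1 hb (hba ▸ hsup ha hb) hy₁ hy₂
  exact hconv.1 a.1 b.1 x y hleft hright hx₁ hx₂

end Cells

section Region

variable {X : Finset (ℤ × ℤ)}

theorem mem_region_iff {p : ℝ × ℝ} : p ∈ Region X ↔
    ∃ c ∈ X, ((c.1 : ℝ) - 1 ≤ p.1 ∧ p.1 ≤ c.1) ∧ ((c.2 : ℝ) - 1 ≤ p.2 ∧ p.2 ≤ c.2) := by
  simp only [Region, Set.mem_iUnion₂, Set.mem_Icc, Prod.le_def, exists_prop]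
  exact exists_congr fun c => and_congr_right fun _ => and_and_and_comm

theorem mem_region_of_mem_verts {v : ℤ × ℤ} (hv : v ∈ Verts X) :
    (((v.1 : ℝ), (v.2 : ℝ)) : ℝ × ℝ) ∈ Region X := by
  obtain ⟨c, hc, h₁, h₂⟩ := mem_verts_iff.1 hv
  refine mem_region_iff.2 ⟨c, hc, ?_, ?_⟩
  · rcases h₁ with h | h <;> rw [h] <;> push_cast <;> constructor <;> linarith
  · rcases h₂ with h | h <;> rw [h] <;> push_cast <;> constructor <;> linarith

theorem mem_of_mem_interior_region {v : ℤ × ℤ}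
    (hv : (((v.1 : ℝ), (v.2 : ℝ)) : ℝ × ℝ) ∈ interior (Region X)) : v ∈ X := by
  obtain ⟨ε, hε, hball⟩ := Metric.mem_nhds_iff.1 (mem_interior_iff_mem_nhds.1 hv)
  set δ : ℝ := min (ε / 2) (1 / 2)
  have hδ : 0 < δ := by positivity
  have hδε : δ < ε := (min_le_left _ _).trans_lt (half_lt_self hε)
  have hδ1 : δ < 1 := (min_le_right _ _).trans_lt (by norm_num)
  have hmem : ((v.1 : ℝ) - δ, (v.2 : ℝ) - δ) ∈ Metric.ball (((v.1 : ℝ), (v.2 : ℝ)) : ℝ × ℝ) ε := by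
    simp [Prod.dist_eq, abs_of_pos hδ, hδε]
  obtain ⟨c, hc, ⟨h₁, h₂⟩, h₃, h₄⟩ := mem_region_iff.1 (hball hmem)
  dsimp only at h₁ h₂ h₃ h₄
  have e₁ : (v.1 : ℝ) < c.1 + 1 ∧ (c.1 : ℝ) < v.1 + 1 := ⟨by linarith, by linarith⟩
  have e₂ : (v.2 : ℝ) < c.2 + 1 ∧ (c.2 : ℝ) < v.2 + 1 := ⟨by linarith, by linarith⟩
  norm_cast at e₁ e₂
  rwa [show v = c by ext <;> omega]

theorem mem_interior_region_of_forall {v : ℤ × ℤ}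
    (h : ∀ x y : ℤ, v.1 ≤ x → x ≤ v.1 + 1 → v.2 ≤ y → y ≤ v.2 + 1 → (x, y) ∈ X) :
    (((v.1 : ℝ), (v.2 : ℝ)) : ℝ × ℝ) ∈ interior (Region X) := by
  refine mem_interior.2 ⟨Set.Ioo ((v.1 : ℝ) - 1) (v.1 + 1) ×ˢ Set.Ioo ((v.2 : ℝ) - 1) (v.2 + 1),
    ?_, isOpen_Ioo.prod isOpen_Ioo, by simp⟩
  rintro ⟨x, y⟩ ⟨⟨hx₁, hx₂⟩, hy₁, hy₂⟩
  -- the point `(x, y)` lies in the cell `(⌈x⌉, ⌈y⌉)`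
  have hx := Int.ceil_lt_add_one x
  have hy := Int.ceil_lt_add_one y
  refine mem_region_iff.2 ⟨(⌈x⌉, ⌈y⌉), h _ _ ?_ ?_ ?_ ?_,
    ⟨by dsimp only; linarith, Int.le_ceil x⟩, ⟨by dsimp only; linarith, Int.le_ceil y⟩⟩
  · exact Int.le_ceil_iff.2 (by linarith)
  · exact Int.ceil_le.2 (by push_cast; linarith)
  · exact Int.le_ceil_iff.2 (by linarith)
  · exact Int.ceil_le.2 (by push_cast; linarith)

theorem mem_frontier_region {v : ℤ × ℤ} (hv : v ∈ Verts X) (hvX : v ∉ X) :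
    (((v.1 : ℝ), (v.2 : ℝ)) : ℝ × ℝ) ∈ frontier (Region X) :=
  ⟨subset_closure (mem_region_of_mem_verts hv), fun h => hvX (mem_of_mem_interior_region h)⟩

end Region

theorem isChain_le_of_fst_lt_imp_snd_le {α β : Type*} [LinearOrder α] [LinearOrder β]
    {S : Set (α × β)} (h : ∀ v ∈ S, ∀ w ∈ S, v.1 < w.1 → v.2 ≤ w.2) :
    IsChain (· ≤ ·) S := by
  intro v hv w hw _
  rcases lt_trichotomy v.1 w.1 with hvw | hvw | hwv
  · exact Or.inl (Prod.le_def.2 ⟨hvw.le, h v hv w hw hvw⟩)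
  · rcases le_total v.2 w.2 with h' | h'
    · exact Or.inl (Prod.le_def.2 ⟨hvw.le, h'⟩)
    · exact Or.inr (Prod.le_def.2 ⟨hvw.ge, h'⟩)
  · exact Or.inr (Prod.le_def.2 ⟨hwv.le, h w hw v hv hwv⟩)

section Boundary

variable {X : Finset (ℤ × ℤ)}

theorem mem_of_mem_leftBdry {v : ℤ × ℤ} (hv : v ∈ LeftBdry X) : (v.1 + 1, v.2) ∈ X := by
  obtain ⟨⟨c, hc, rfl⟩, -⟩ := hv
  simpa using hc

theorem mem_of_mem_bottomBdry {v : ℤ × ℤ} (hv : v ∈ BottomBdry X) : (v.1, v.2 + 1) ∈ X := by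
  obtain ⟨⟨c, hc, rfl⟩, -⟩ := hv
  simpa using hc

theorem isChain_leftBdry (hconv : IsConvexPoly X)
    (hsup : SupClosed (X : Set (ℤ × ℤ))) (hinf : InfClosed (X : Set (ℤ × ℤ))) :
    IsChain (· ≤ ·) (LeftBdry X) := by
  refine isChain_le_of_fst_lt_imp_snd_le fun v hv w hw hvw => le_of_not_gt fun hwv => hw.2.2 ?_
  exact mem_interior_region_of_forall fun x y hx₁ hx₂ hy₁ hy₂ =>
    hconv.mem_rectangle hsup hinf (mem_of_mem_leftBdry hv) (mem_of_mem_leftBdry hw)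
      (by dsimp only; omega) (by dsimp only; omega) (by dsimp only; omega) (by dsimp only; omega)

theorem isChain_bottomBdry (hconv : IsConvexPoly X)
    (hsup : SupClosed (X : Set (ℤ × ℤ))) (hinf : InfClosed (X : Set (ℤ × ℤ))) :
    IsChain (· ≤ ·) (BottomBdry X) := by
  refine isChain_le_of_fst_lt_imp_snd_le fun v hv w hw hvw => le_of_not_gt fun hwv => hv.2.2 ?_
  exact mem_interior_region_of_forall fun x y hx₁ hx₂ hy₁ hy₂ =>
    hconv.mem_rectangle hsup hinf (mem_of_mem_bottomBdry hv) (mem_of_mem_bottomBdry hw)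
      (by dsimp only; omega) (by dsimp only; omega) (by dsimp only; omega) (by dsimp only; omega)

theorem notMem_of_mem_joinIrr {p : ℤ × ℤ} (hp : p ∈ JoinIrr X) : p ∉ X := by
  intro hpX
  have h₁ : (p.1 - 1, p.2) ∈ Verts X := mem_verts_iff.2 ⟨p, hpX, by simp⟩
  have h₂ : (p.1, p.2 - 1) ∈ Verts X := mem_verts_iff.2 ⟨p, hpX, by simp⟩
  exact hp.2.2 _ h₁ _ h₂ (Prod.lt_iff.2 (Or.inl ⟨by simp, le_rfl⟩))
    (Prod.lt_iff.2 (Or.inr ⟨le_rfl, by simp⟩)) (by ext <;> simp)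

theorem IsConvexPoly.fst_lt_and_snd_lt_of_mem (hconv : IsConvexPoly X) (hX : IsPolyomino X)
    (hinf : InfClosed (X : Set (ℤ × ℤ))) {p : ℤ × ℤ} (hNE : (p.1 + 1, p.2 + 1) ∈ X)
    (hE : (p.1 + 1, p.2) ∉ X) (hN : (p.1, p.2 + 1) ∉ X) {c : ℤ × ℤ} (hc : c ∈ X) :
    p.1 < c.1 ∧ p.2 < c.2 := by
  constructor
  · by_contra! hcp
    obtain ⟨y, hy, hy'⟩ := hX.exists_mem_of_le_lt_fst hc hNE hcp (by simp)
    rcases le_or_gt y p.2 with hyp | hpy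
    · exact hE (hconv.2 y (p.2 + 1) p.2 (p.1 + 1) hy' hNE hyp (by omega))
    · have := hinf hy hNE
      rw [show ((p.1, y) ⊓ (p.1 + 1, p.2 + 1) : ℤ × ℤ) = (p.1, p.2 + 1) by
        ext <;> simp; omega] at this
      exact hN this
  · by_contra! hcp
    obtain ⟨x, hx, hx'⟩ := hX.exists_mem_of_le_lt_snd hc hNE hcp (by simp)
    rcases le_or_gt x p.1 with hxp | hpx
    · exact hN (hconv.1 x (p.1 + 1) p.1 (p.2 + 1) hx' hNE hxp (by omega))
    · have := hinf hx hNE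
      rw [show ((x, p.2) ⊓ (p.1 + 1, p.2 + 1) : ℤ × ℤ) = (p.1 + 1, p.2) by
        ext <;> simp; omega] at this
      exact hE this

theorem mem_leftBdry_or_mem_bottomBdry_of_mem_joinIrr (hconv : IsConvexPoly X)
    (hX : IsPolyomino X) (hinf : InfClosed (X : Set (ℤ × ℤ))) {p : ℤ × ℤ}
    (hp : p ∈ JoinIrr X) : p ∈ LeftBdry X ∨ p ∈ BottomBdry X := by
  have hpX := notMem_of_mem_joinIrr hp
  have hfr := mem_frontier_region hp.1 hpX
  have hleft : (p.1 + 1, p.2) ∈ X → p ∈ LeftBdry X := fun h => ⟨⟨_, h, by ext <;> simp⟩, hfr⟩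
  have hbot : (p.1, p.2 + 1) ∈ X → p ∈ BottomBdry X := fun h => ⟨⟨_, h, by ext <;> simp⟩, hfr⟩
  obtain ⟨⟨c₁, c₂⟩, hc, h₁ | h₁, h₂ | h₂⟩ := mem_verts_iff.1 hp.1 <;>
    dsimp only at h₁ h₂ <;> subst h₁ h₂
  · exact absurd hc hpX
  · exact Or.inr (hbot hc)
  · exact Or.inl (hleft hc)
  by_contra! h
  -- the diagonal cell is then the only cell at `p`, hence below and left of every cell
  obtain ⟨q, hq, hqp⟩ := hp.2.1
  obtain ⟨c, hc', hc₁, hc₂⟩ := mem_verts_iff.1 hq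
  have := hconv.fst_lt_and_snd_lt_of_mem hX hinf hc (mt hleft h.1) (mt hbot h.2) hc'
  rcases Prod.lt_iff.1 hqp with ⟨h', -⟩ | ⟨-, h'⟩ <;> omega

end Boundary

theorem boundary_vertices_totally_ordered (X : Finset (ℤ × ℤ)) (m n : ℕ)
    (hpoly : IsPolyomino X) (hconv : IsConvexPoly X)
    (hlat : LatticeSetup X m n) :
    IsChain (· ≤ ·) (LeftBdry X) ∧ IsChain (· ≤ ·) (BottomBdry X) ∧
      ∀ p ∈ JoinIrr X, ∀ p' ∈ JoinIrr X, ¬ p ≤ p' → ¬ p' ≤ p →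
        (p ∈ LeftBdry X ∧ p' ∈ BottomBdry X) ∨ (p ∈ BottomBdry X ∧ p' ∈ LeftBdry X) := by
  have hsup := hconv.supClosed hpoly fun _ ha _ hb => (hlat.1 _ ha _ hb).1
  have hinf := hconv.infClosed hpoly fun _ ha _ hb => (hlat.1 _ ha _ hb).2
  have hL := isChain_leftBdry hconv hsup hinf
  have hB := isChain_bottomBdry hconv hsup hinf
  refine ⟨hL, hB, fun p hp p' hp' h h' => ?_⟩
  have hne : p ≠ p' := fun e => h (e ▸ le_rfl)
  rcases mem_leftBdry_or_mem_bottomBdry_of_mem_joinIrr hconv hpoly hinf hp with hpL | hpB <;>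
    rcases mem_leftBdry_or_mem_bottomBdry_of_mem_joinIrr hconv hpoly hinf hp' with hpL' | hpB'
  · exact ((hL hpL hpL' hne).elim h h').elim
  · exact Or.inl ⟨hpL, hpB'⟩
  · exact Or.inr ⟨hpB, hpL'⟩
  · exact ((hB hpB hpB' hne).elim h h').elim
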